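/- Let W ∈ 𝓜 be a branch word, and let A = {(1,0), (0,1)} ∪ {(a,b) ∈ ℤ² : a ≥ 1, b ≥ 1, gcd(a,b) = 1}. Then the map (a,b) ↦ 𝔤 + a·v_SK^W + b·v_TK^W (where 𝔤 = ẽ_{s₀} + ẽ_{t₀} − ẽ_{k₀}) is injective on A, and its image is exactly the set of all vectors of the form g_M^{WX} with M ∈ {K,S,T} and X ∈ 𝓜. -/

import Mathlib

namespace Markov

/-- The ambient space ℝ³. -/
abbrev V3 : Type := Fin 3 → ℝ

/-- Standard basis vectors ẽ₁, ẽ₂, ẽ₃ (indexed by `Fin 3`). -/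
noncomputable def e (i : Fin 3) : V3 := Pi.single i 1

/-- The two generating letters of the free monoid 𝓜. -/
inductive Lt
  | S
  | T
  deriving DecidableEq

/-- Elements of the free monoid 𝓜 on `{S, T}`, as words (lists of letters
read left to right); the monoid operation is `++` and the identity is `[]`. -/
abbrev Word := List Lt

/-- A word is a trunk word iff it consists only of the letter `S`
(otherwise it is a branch word). -/
def IsTrunk (X : Word) : Prop := ∀ l ∈ X, l = Lt.S

/-- Boolean trunk test. -/
def trunkB (X : Word) : Bool := X.all (fun l => decide (l = Lt.S))

/-- One mutation step for the triple `(g_K, g_S, g_T)`; the flag `trunk`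
records whether the word being extended (on the right) is a trunk word. -/
noncomputable def gStep (trunk : Bool) (l : Lt) (v : V3 × V3 × V3) :
    V3 × V3 × V3 :=
  match l with
  | Lt.S => (2 • v.1 - v.2.1, v.1, v.2.2)
  | Lt.T =>
    if trunk then (2 • v.2.1 - v.2.2, v.2.1, v.1)
    else (2 • v.1 - v.2.2, v.1, v.2.1)

/-- Auxiliary recursion computing the g-vectors from the reversed word
(head of the list = last letter of the word). -/
noncomputable def gRev (k s t : Fin 3) : Word → V3 × V3 × V3
  | [] => (2 • e s - e k, e s, e t)
  | l :: X => gStep (trunkB X) l (gRev k s t X)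

/-- The triple of modified g-vectors `(g_K^X, g_S^X, g_T^X)` for the
permutation `(k₀, s₀, t₀) = (k, s, t)` of the indices. -/
noncomputable def g (k s t : Fin 3) (X : Word) : V3 × V3 × V3 :=
  gRev k s t X.reverse

/-- One mutation step for the triple `(c_K, c_S, c_T)`. -/
noncomputable def cStep (trunk : Bool) (l : Lt) (v : V3 × V3 × V3) :
    V3 × V3 × V3 :=
  match l with
  | Lt.S => (-v.2.1, v.1 + 2 • v.2.1, v.2.2)
  | Lt.T =>
    if trunk then (-v.2.2, v.2.1 + 2 • v.2.2, v.1)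
    else (-v.2.2, v.1 + 2 • v.2.2, v.2.1)

noncomputable def cRev (k s t : Fin 3) : Word → V3 × V3 × V3
  | [] => (-(e k), e s + 2 • e k, e t)
  | l :: X => cStep (trunkB X) l (cRev k s t X)

/-- The triple of modified c-vectors `(c_K^X, c_S^X, c_T^X)`. -/
noncomputable def c (k s t : Fin 3) (X : Word) : V3 × V3 × V3 :=
  cRev k s t X.reverse

/-- `g_F^X = g_S^X + g_T^X − g_K^X`. -/
noncomputable def gF (k s t : Fin 3) (X : Word) : V3 :=
  (g k s t X).2.1 + (g k s t X).2.2 - (g k s t X).1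

/-- `v_SK^X = g_K^X − g_S^X`. -/
noncomputable def vSK (k s t : Fin 3) (X : Word) : V3 :=
  (g k s t X).1 - (g k s t X).2.1

/-- `v_TK^X = g_K^X − g_T^X`. -/
noncomputable def vTK (k s t : Fin 3) (X : Word) : V3 :=
  (g k s t X).1 - (g k s t X).2.2

/-- `c_F^X = c_K^X + c_S^X + c_T^X`. -/
noncomputable def cF (k s t : Fin 3) (X : Word) : V3 :=
  (c k s t X).1 + (c k s t X).2.1 + (c k s t X).2.2

/-- `x_SK^X = c_K^X + c_S^X`. -/
noncomputable def xSK (k s t : Fin 3) (X : Word) : V3 :=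
  (c k s t X).1 + (c k s t X).2.1

/-- `x_TK^X = −(c_K^X + c_T^X)`. -/
noncomputable def xTK (k s t : Fin 3) (X : Word) : V3 :=
  -((c k s t X).1 + (c k s t X).2.2)

/-- Closed cone spanned by two vectors. -/
def C2 (v1 v2 : V3) : Set V3 :=
  {x | ∃ la lb : ℝ, 0 ≤ la ∧ 0 ≤ lb ∧ x = la • v1 + lb • v2}

/-- Relatively open cone spanned by two vectors. -/
def C2o (v1 v2 : V3) : Set V3 :=
  {x | ∃ la lb : ℝ, 0 < la ∧ 0 < lb ∧ x = la • v1 + lb • v2}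

/-- Closed cone spanned by three vectors. -/
def C3 (v1 v2 v3 : V3) : Set V3 :=
  {x | ∃ la lb lc : ℝ, 0 ≤ la ∧ 0 ≤ lb ∧ 0 ≤ lc ∧ x = la • v1 + lb • v2 + lc • v3}

/-- Relatively open cone spanned by four vectors. -/
def C4o (v1 v2 v3 v4 : V3) : Set V3 :=
  {x | ∃ la lb lc ld : ℝ, 0 < la ∧ 0 < lb ∧ 0 < lc ∧ 0 < ld ∧
    x = la • v1 + lb • v2 + lc • v3 + ld • v4}

/-- The set `U_∘^X = C°(g_S^X, g_T^X, v_SK^X, v_TK^X)`. -/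
noncomputable def Uo (k s t : Fin 3) (X : Word) : Set V3 :=
  C4o (g k s t X).2.1 (g k s t X).2.2 (vSK k s t X) (vTK k s t X)

/-- The set `U^W = U_∘^W ∪ C(g_S^W, g_T^W)`. -/
noncomputable def Uset (k s t : Fin 3) (W : Word) : Set V3 :=
  Uo k s t W ∪ C2 (g k s t W).2.1 (g k s t W).2.2

/-- Recursion step for the Calkin–Wilf-type coefficients `q`. -/
def qstep (l : Lt) (p : ℤ × ℤ) : ℤ × ℤ :=
  match l with
  | Lt.S => (p.1 + p.2, p.2)
  | Lt.T => (p.2, p.1 + p.2)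

/-- `qfun init X` : the pair obtained from `init` by the recursion
`q^{SX} = (a+b, b)`, `q^{TX} = (b, a+b)` (letters prepended). -/
def qfun (init : ℤ × ℤ) : Word → ℤ × ℤ
  | [] => init
  | l :: X => qstep l (qfun init X)

/-- Recursion step for the coefficients `p`. -/
def pstep (l : Lt) (p : ℤ × ℤ) : ℤ × ℤ :=
  match l with
  | Lt.S => (p.1 + p.2, p.2)
  | Lt.T => (-p.2, -p.1 - p.2)

/-- `pfun init X` : the pair obtained from `init` by the recursion
`p^{SX} = (a+b, b)`, `p^{TX} = (−b, −a−b)` (letters prepended). -/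
def pfun (init : ℤ × ℤ) : Word → ℤ × ℤ
  | [] => init
  | l :: X => pstep l (pfun init X)

/-- The three index data `σ₁ = (1,3,2)`, `σ₂ = (2,1,3)`, `σ₃ = (3,2,1)`
(written with indices `0,1,2` instead of `1,2,3`). -/
def sig : Fin 3 → Fin 3 × Fin 3 × Fin 3 :=
  ![(0, 2, 1), (1, 0, 2), (2, 1, 0)]

/-- Modified g-vectors for the `i`-th subtree of the Markov quiver. -/
noncomputable def gM (i : Fin 3) (X : Word) : V3 × V3 × V3 :=
  g (sig i).1 (sig i).2.1 (sig i).2.2 X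

/-- `𝔤ᵢ = ẽ_{s₀(i)} + ẽ_{t₀(i)} − ẽ_{k₀(i)}`. -/
noncomputable def giFrak (i : Fin 3) : V3 :=
  e (sig i).2.1 + e (sig i).2.2 - e (sig i).1

/-- The set `𝔊ᵢ` of modified g-vectors in the `i`-th subtree. -/
noncomputable def Gset (i : Fin 3) : Set V3 :=
  {v | ∃ a b : ℤ, 1 ≤ a ∧ 1 ≤ b ∧ Int.gcd a b = 1 ∧
      v = giFrak i + (a : ℝ) • (e (sig i).1 - e (sig i).2.2) +
        (b : ℝ) • (e (sig i).2.1 - e (sig i).1)} ∪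
    {e (sig i).2.1}

/-- The support `𝒮` of the G-fan of the Markov quiver. -/
noncomputable def Supp : Set V3 :=
  C3 (e 0) (e 1) (e 2) ∪
    ⋃ (i : Fin 3), ⋃ (X : Word), C3 (gM i X).1 (gM i X).2.1 (gM i X).2.2

/-- The half space `V = {x : x₁+x₂+x₃ > 0} ∪ {0}`. -/
def Vhalf : Set V3 := {x | 0 < x 0 + x 1 + x 2} ∪ {0}

/-! For a branch word `W` the triple `g^W` satisfies `g_S + g_T - g_K = 𝔤`, so it is the image of
the coefficient triple `((1,1), (0,1), (1,0))` under the affine map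
`p ↦ 𝔤 + p₁ v_SK^W + p₂ v_TK^W`. Past a branch word every letter acts by the same rule
`(K, S, T) ↦ (2K - S, K, T)` or `(2K - T, K, S)`, which commutes with affine maps, so `g^{WX}` is
the image of the triple of integer pairs produced by that rule. These triples keep the shape
`(q_S + q_T, q_S, q_T)` with `q_S, q_T ≥ 0` and `det (q_S, q_T) = ±1`, so all entries are
nonnegative coprime pairs, and Euclid's algorithm shows every such pair occurs. Injectivity holds
because each mutation changes `(v_SK, v_TK)` by an invertible integer matrix, so the two vectors
stay linearly independent. -/

def mutate {M : Type*} [AddCommGroup M] (l : Lt) (v : M × M × M) : M × M × M :=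
  match l with
  | Lt.S => (2 • v.1 - v.2.1, v.1, v.2.2)
  | Lt.T => (2 • v.1 - v.2.2, v.1, v.2.1)

lemma gStep_false (l : Lt) (v : V3 × V3 × V3) : gStep false l v = mutate l v := by
  cases l <;> rfl

lemma trunkB_eq_true_iff (X : Word) : trunkB X = true ↔ IsTrunk X := by
  simp [trunkB, IsTrunk]

lemma isTrunk_append_singleton {X : Word} {l : Lt} :
    IsTrunk (X ++ [l]) ↔ IsTrunk X ∧ l = Lt.S := by
  simp [IsTrunk, or_imp, forall_and]

lemma trunkB_append_eq_false {W : Word} (hW : ¬ IsTrunk W) (X : Word) :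
    trunkB (W ++ X) = false := by
  rw [← Bool.not_eq_true, trunkB_eq_true_iff]
  exact fun h => hW fun l hl => h l (List.mem_append_left X hl)

section

variable (k s t : Fin 3)

lemma g_nil : g k s t [] = (2 • e s - e k, e s, e t) := rfl

lemma g_append_singleton (X : Word) (l : Lt) :
    g k s t (X ++ [l]) = gStep (trunkB X) l (g k s t X) := by
  simp [g, gRev, trunkB, List.all_reverse]

lemma g_of_isTrunk {X : Word} (hX : IsTrunk X) :
    (g k s t X).1 - (g k s t X).2.1 = e s - e k ∧ (g k s t X).2.2 = e t := by
  induction X using List.reverseRecOn with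
  | nil => exact ⟨by rw [g_nil]; module, rfl⟩
  | append_singleton X l ih =>
    obtain ⟨hX', rfl⟩ := isTrunk_append_singleton.mp hX
    obtain ⟨h1, h2⟩ := ih hX'
    rw [g_append_singleton]
    refine ⟨?_, h2⟩
    simp only [gStep]
    rw [← h1]
    module

lemma gF_of_not_isTrunk {X : Word} (hX : ¬ IsTrunk X) : gF k s t X = e s + e t - e k := by
  induction X using List.reverseRecOn with
  | nil => exact absurd (fun _ h => absurd h List.not_mem_nil) hX
  | append_singleton X l ih =>
    by_cases hX' : IsTrunk X
    · obtain rfl : l = Lt.T := by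
        cases l
        · exact absurd (isTrunk_append_singleton.mpr ⟨hX', rfl⟩) hX
        · rfl
      obtain ⟨h1, h2⟩ := g_of_isTrunk k s t hX'
      simp only [gF, g_append_singleton, (trunkB_eq_true_iff X).mpr hX', gStep, if_true]
      calc _ = ((g k s t X).1 - (g k s t X).2.1) + (g k s t X).2.2 := by module
        _ = _ := by rw [h1, h2]; module
    · have hb : trunkB X = false := (Bool.not_eq_true _).mp (mt (trunkB_eq_true_iff X).mp hX')
      rw [← ih hX', gF, gF, g_append_singleton, hb, gStep_false]
      cases l <;> simp only [mutate] <;> module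

lemma exists_vSK_vTK_append_singleton (X : Word) (l : Lt) :
    ∃ a b c d : ℤ, a * d ≠ b * c ∧
      vSK k s t (X ++ [l]) = a • vSK k s t X + b • vTK k s t X ∧
      vTK k s t (X ++ [l]) = c • vSK k s t X + d • vTK k s t X := by
  simp only [vSK, vTK, g_append_singleton]
  cases l <;> cases trunkB X
  · exact ⟨1, 0, 1, 1, by norm_num, by dsimp [gStep]; module, by dsimp [gStep]; module⟩
  · exact ⟨1, 0, 1, 1, by norm_num, by dsimp [gStep]; module, by dsimp [gStep]; module⟩
  · exact ⟨0, 1, 1, 1, by norm_num, by dsimp [gStep]; module, by dsimp [gStep]; module⟩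
  · exact ⟨-1, 1, -2, 1, by norm_num, by dsimp [gStep]; module, by dsimp [gStep]; module⟩

theorem linearIndependent_vSK_vTK (hks : k ≠ s) (hkt : k ≠ t) (hst : s ≠ t) (X : Word) :
    LinearIndependent ℝ ![vSK k s t X, vTK k s t X] := by
  induction X using List.reverseRecOn with
  | nil =>
    rw [LinearIndependent.pair_iff]
    intro x y h
    have hk := congrFun h k
    have ht := congrFun h t
    simp [vSK, vTK, g_nil, e, hks, hkt, hkt.symm, hst.symm] at hk ht
    constructor <;> linarith
  | append_singleton X l ih =>
    obtain ⟨a, b, c, d, hdet, h1, h2⟩ := exists_vSK_vTK_append_singleton k s t X l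
    rw [h1, h2]
    exact (LinearIndependent.pair_add_smul_add_smul_iff a b c d).mpr ⟨ih, hdet⟩

end

lemma mutate_map {M N : Type*} [AddCommGroup M] [AddCommGroup N] {f : M → N}
    (hf : ∀ p q, f (2 • p - q) = 2 • f p - f q) (l : Lt) (v : M × M × M) :
    mutate l (Prod.map f (Prod.map f f) v) = Prod.map f (Prod.map f f) (mutate l v) := by
  cases l <;> simp [mutate, hf]

lemma foldl_mutate_map {M N : Type*} [AddCommGroup M] [AddCommGroup N] {f : M → N}
    (hf : ∀ p q, f (2 • p - q) = 2 • f p - f q) (X : Word) (v : M × M × M) :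
    X.foldl (fun w l => mutate l w) (Prod.map f (Prod.map f f) v) =
      Prod.map f (Prod.map f f) (X.foldl (fun w l => mutate l w) v) := by
  induction X generalizing v with
  | nil => rfl
  | cons l X ih => simp only [List.foldl_cons, mutate_map hf, ih]

lemma g_append_of_not_isTrunk (k s t : Fin 3) {W : Word} (hW : ¬ IsTrunk W) (X : Word) :
    g k s t (W ++ X) = X.foldl (fun v l => mutate l v) (g k s t W) := by
  induction X using List.reverseRecOn with
  | nil => simp
  | append_singleton X l ih =>
    rw [← List.append_assoc, g_append_singleton, List.foldl_concat, ← ih,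
      trunkB_append_eq_false hW, gStep_false]

section LatticeMap

variable {V : Type*} [AddCommGroup V] [Module ℝ V]

def latticeMap (c u v : V) (p : ℤ × ℤ) : V := c + (p.1 : ℝ) • u + (p.2 : ℝ) • v

lemma latticeMap_two_smul_sub (c u v : V) (p q : ℤ × ℤ) :
    latticeMap c u v (2 • p - q) = 2 • latticeMap c u v p - latticeMap c u v q := by
  simp only [latticeMap, Prod.fst_sub, Prod.snd_sub, Prod.smul_fst, Prod.smul_snd]
  push_cast [nsmul_eq_mul]
  module

lemma latticeMap_injective (c : V) {u v : V} (h : LinearIndependent ℝ ![u, v]) :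
    Function.Injective (latticeMap c u v) := by
  intro p q hpq
  obtain ⟨h1, h2⟩ := LinearIndependent.pair_iff.mp h (p.1 - q.1) (p.2 - q.2) <| by
    simp only [latticeMap] at hpq
    rw [sub_smul, sub_smul]
    linear_combination (norm := module) hpq
  exact Prod.ext (by exact_mod_cast sub_eq_zero.mp h1) (by exact_mod_cast sub_eq_zero.mp h2)

end LatticeMap

/-- The coefficients of `g^{WX}`, for a branch word `W`, in the affine frame
`(𝔤, v_SK^W, v_TK^W)`. -/
def coeffs (X : Word) : (ℤ × ℤ) × (ℤ × ℤ) × (ℤ × ℤ) :=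
  X.foldl (fun q l => mutate l q) ((1, 1), (0, 1), (1, 0))

lemma g_append_eq_map_coeffs (k s t : Fin 3) {W : Word} (hW : ¬ IsTrunk W) (X : Word) :
    let F := latticeMap (e s + e t - e k) (vSK k s t W) (vTK k s t W)
    g k s t (W ++ X) = Prod.map F (Prod.map F F) (coeffs X) := by
  intro F
  have hgW : g k s t W = Prod.map F (Prod.map F F) ((1, 1), (0, 1), (1, 0)) := by
    have hgF := gF_of_not_isTrunk k s t hW
    simp only [gF] at hgF
    simp only [Prod.map, F, latticeMap, vSK, vTK, ← hgF]
    refine Prod.ext ?_ (Prod.ext ?_ ?_) <;> push_cast <;> module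
  rw [g_append_of_not_isTrunk k s t hW, hgW, coeffs,
    foldl_mutate_map (latticeMap_two_smul_sub _ _ _)]

def cross (p q : ℤ × ℤ) : ℤ := p.1 * q.2 - p.2 * q.1

def nonnegCoprimePairs : Set (ℤ × ℤ) := {p | 0 ≤ p.1 ∧ 0 ≤ p.2 ∧ IsCoprime p.1 p.2}

lemma isCoprime_of_isUnit_cross {p q : ℤ × ℤ} (h : IsUnit (cross p q)) :
    IsCoprime p.1 p.2 ∧ IsCoprime q.1 q.2 := by
  have hd := Int.isUnit_mul_self h
  unfold cross at hd
  exact ⟨⟨cross p q * q.2, -(cross p q * q.1), by unfold cross; linear_combination hd⟩,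
    ⟨-(cross p q * p.2), cross p q * p.1, by unfold cross; linear_combination hd⟩⟩

lemma union_eq_nonnegCoprimePairs :
    ({((1 : ℤ), (0 : ℤ)), ((0 : ℤ), (1 : ℤ))} : Set (ℤ × ℤ)) ∪
      {p : ℤ × ℤ | 1 ≤ p.1 ∧ 1 ≤ p.2 ∧ Int.gcd p.1 p.2 = 1} = nonnegCoprimePairs := by
  ext ⟨a, b⟩
  simp only [nonnegCoprimePairs, Set.mem_union, Set.mem_insert_iff, Set.mem_singleton_iff,
    Set.mem_ofPred_eq, Prod.mk.injEq, Int.isCoprime_iff_gcd_eq_one]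
  constructor
  · rintro ((⟨rfl, rfl⟩ | ⟨rfl, rfl⟩) | ⟨ha, hb, hab⟩)
    · simp
    · simp
    · exact ⟨by omega, by omega, hab⟩
  · rintro ⟨ha, hb, hab⟩
    rcases ha.eq_or_lt with rfl | ha
    · simp at hab
      omega
    rcases hb.eq_or_lt with rfl | hb
    · simp at hab
      omega
    exact Or.inr ⟨ha, hb, hab⟩

def IsUnimodularTriple (q : (ℤ × ℤ) × (ℤ × ℤ) × (ℤ × ℤ)) : Prop :=
  q.1 = q.2.1 + q.2.2 ∧ 0 ≤ q.2.1 ∧ 0 ≤ q.2.2 ∧ IsUnit (cross q.2.1 q.2.2)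

lemma IsUnimodularTriple.mutate {q : (ℤ × ℤ) × (ℤ × ℤ) × (ℤ × ℤ)} (h : IsUnimodularTriple q)
    (l : Lt) : IsUnimodularTriple (mutate l q) := by
  obtain ⟨hK, hS, hT, hu⟩ := h
  cases l
  · refine ⟨by simp only [Markov.mutate, hK]; abel, hK ▸ add_nonneg hS hT, hT, ?_⟩
    convert hu using 1
    simp only [Markov.mutate, cross, hK, Prod.fst_add, Prod.snd_add]
    ring
  · refine ⟨by simp only [Markov.mutate, hK]; abel, hK ▸ add_nonneg hS hT, hS, ?_⟩
    convert hu.neg using 1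
    simp only [Markov.mutate, cross, hK, Prod.fst_add, Prod.snd_add]
    ring

lemma IsUnimodularTriple.mem_nonnegCoprimePairs {q : (ℤ × ℤ) × (ℤ × ℤ) × (ℤ × ℤ)}
    (h : IsUnimodularTriple q) :
    q.1 ∈ nonnegCoprimePairs ∧ q.2.1 ∈ nonnegCoprimePairs ∧ q.2.2 ∈ nonnegCoprimePairs := by
  obtain ⟨hK, ⟨hS1, hS2⟩, ⟨hT1, hT2⟩, hu⟩ := h
  have hKT : cross q.1 q.2.2 = cross q.2.1 q.2.2 := by
    simp only [cross, hK, Prod.fst_add, Prod.snd_add]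
    ring
  obtain ⟨hcS, hcT⟩ := isCoprime_of_isUnit_cross hu
  refine ⟨⟨?_, ?_, (isCoprime_of_isUnit_cross (hKT ▸ hu)).1⟩, ⟨hS1, hS2, hcS⟩, ⟨hT1, hT2, hcT⟩⟩
  · rw [hK, Prod.fst_add]; exact add_nonneg hS1 hT1
  · rw [hK, Prod.snd_add]; exact add_nonneg hS2 hT2

lemma coeffs_append_singleton (X : Word) (l : Lt) :
    coeffs (X ++ [l]) = mutate l (coeffs X) :=
  List.foldl_concat _ _ _ _

lemma isUnimodularTriple_coeffs (X : Word) : IsUnimodularTriple (coeffs X) := by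
  induction X using List.reverseRecOn with
  | nil => exact ⟨rfl, by decide, by decide, by decide⟩
  | append_singleton X l ih => rw [coeffs_append_singleton]; exact ih.mutate l

lemma exists_foldl_mutate_fst_eq {q : (ℤ × ℤ) × (ℤ × ℤ) × (ℤ × ℤ)} (hq : q.1 = q.2.1 + q.2.2)
    {α β : ℤ} (hα : 1 ≤ α) (hβ : 1 ≤ β)
    (hcop : IsCoprime (α • q.2.1 + β • q.2.2).1 (α • q.2.1 + β • q.2.2).2) :
    ∃ Y : Word, (Y.foldl (fun v l => mutate l v) q).1 = α • q.2.1 + β • q.2.2 := by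
  -- Euclid's algorithm: subtract the smaller of `α`, `β` from the larger.
  induction hn : (α + β).toNat using Nat.strong_induction_on generalizing q α β with
  | _ n ih =>
    rcases lt_trichotomy α β with hlt | rfl | hgt
    · have hq' : (mutate Lt.S q).1 = (mutate Lt.S q).2.1 + (mutate Lt.S q).2.2 := by
        simp only [mutate, hq]; abel
      have hsum : α • q.2.1 + β • q.2.2 =
          α • (mutate Lt.S q).2.1 + (β - α) • (mutate Lt.S q).2.2 := by
        simp only [mutate, hq]; module
      rw [hsum] at hcop ⊢
      obtain ⟨Y, hY⟩ := ih _ (by omega) hq' hα (by omega) hcop rfl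
      exact ⟨Lt.S :: Y, hY⟩
    · have hsum : α • q.2.1 + α • q.2.2 = α • q.1 := by rw [hq, smul_add]
      rw [hsum] at hcop ⊢
      simp only [Prod.smul_fst, Prod.smul_snd, smul_eq_mul] at hcop
      have hα1 : α = 1 := by
        have := Int.isUnit_iff.mp (isCoprime_self.mp (hcop.of_mul_left_left.of_mul_right_left))
        omega
      exact ⟨[], by rw [hα1, one_smul]; rfl⟩
    · have hq' : (mutate Lt.T q).1 = (mutate Lt.T q).2.1 + (mutate Lt.T q).2.2 := by
        simp only [mutate, hq]; abel
      have hsum : α • q.2.1 + β • q.2.2 =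
          β • (mutate Lt.T q).2.1 + (α - β) • (mutate Lt.T q).2.2 := by
        simp only [mutate, hq]; module
      rw [hsum] at hcop ⊢
      obtain ⟨Y, hY⟩ := ih _ (by omega) hq' hβ (by omega) hcop rfl
      exact ⟨Lt.T :: Y, hY⟩

lemma exists_coeffs_eq {p : ℤ × ℤ} (hp : p ∈ nonnegCoprimePairs) :
    ∃ X, p = (coeffs X).1 ∨ p = (coeffs X).2.1 ∨ p = (coeffs X).2.2 := by
  obtain ⟨h1, h2, hcop⟩ := hp
  rcases h1.eq_or_lt with h1 | h1
  · rw [← h1, isCoprime_zero_left, Int.isUnit_iff] at hcop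
    exact ⟨[], Or.inr (Or.inl (show p = (0, 1) from Prod.ext h1.symm (by dsimp; omega)))⟩
  rcases h2.eq_or_lt with h2 | h2
  · rw [← h2, isCoprime_zero_right, Int.isUnit_iff] at hcop
    exact ⟨[], Or.inr (Or.inr (show p = (1, 0) from Prod.ext (by dsimp; omega) h2.symm))⟩
  obtain ⟨Y, hY⟩ := exists_foldl_mutate_fst_eq (q := ((1, 1), (0, 1), (1, 0))) rfl
    (α := p.2) (β := p.1) h2 h1 (by simpa using hcop)
  exact ⟨Y, Or.inl (by rw [coeffs, hY]; ext <;> simp)⟩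

lemma setOf_coeffs_eq :
    {p | ∃ X, p = (coeffs X).1 ∨ p = (coeffs X).2.1 ∨ p = (coeffs X).2.2} =
      nonnegCoprimePairs := by
  ext p
  refine ⟨?_, exists_coeffs_eq⟩
  rintro ⟨X, rfl | rfl | rfl⟩
  exacts [(isUnimodularTriple_coeffs X).mem_nonnegCoprimePairs.1,
    (isUnimodularTriple_coeffs X).mem_nonnegCoprimePairs.2.1,
    (isUnimodularTriple_coeffs X).mem_nonnegCoprimePairs.2.2]

/-- coprime parameterization of all g-vectors in a branch. -/
theorem stmt_12 (k s t : Fin 3) (hks : k ≠ s) (hkt : k ≠ t) (hst : s ≠ t)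
    (W : Word) (hW : ¬ IsTrunk W) :
    Set.InjOn
      (fun p : ℤ × ℤ => (e s + e t - e k) + (p.1 : ℝ) • vSK k s t W +
        (p.2 : ℝ) • vTK k s t W)
      (({((1 : ℤ), (0 : ℤ)), ((0 : ℤ), (1 : ℤ))} : Set (ℤ × ℤ)) ∪
        {p : ℤ × ℤ | 1 ≤ p.1 ∧ 1 ≤ p.2 ∧ Int.gcd p.1 p.2 = 1}) ∧
    (fun p : ℤ × ℤ => (e s + e t - e k) + (p.1 : ℝ) • vSK k s t W +
        (p.2 : ℝ) • vTK k s t W) ''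
      (({((1 : ℤ), (0 : ℤ)), ((0 : ℤ), (1 : ℤ))} : Set (ℤ × ℤ)) ∪
        {p : ℤ × ℤ | 1 ≤ p.1 ∧ 1 ≤ p.2 ∧ Int.gcd p.1 p.2 = 1}) =
      {v : V3 | ∃ X : Word,
        v = (g k s t (W ++ X)).1 ∨ v = (g k s t (W ++ X)).2.1 ∨
          v = (g k s t (W ++ X)).2.2} := by
  have hg := g_append_eq_map_coeffs k s t hW
  change Set.InjOn (latticeMap _ _ _) _ ∧ latticeMap _ _ _ '' _ = _
  rw [union_eq_nonnegCoprimePairs, ← setOf_coeffs_eq]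
  refine ⟨(latticeMap_injective _ (linearIndependent_vSK_vTK k s t hks hkt hst W)).injOn, ?_⟩
  ext v
  simp only [hg, Set.mem_image, Set.mem_ofPred_eq, Prod.map]
  constructor
  · rintro ⟨p, ⟨X, hX⟩, rfl⟩
    exact ⟨X, by rcases hX with rfl | rfl | rfl <;> simp⟩
  · rintro ⟨X, hX | hX | hX⟩ <;> exact ⟨_, ⟨X, by simp⟩, hX.symm⟩

end Markov
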